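/- arXiv:2106.10742 — 2 statements merged into one kernel-verified Lean document; each statement's English description precedes it below -/
import Mathlib

section
/- Let M and N be chain complexes of R-modules. Then N lies in the subprojectivity domain of M if and only if every chain map M → N factors through a contractible complex ⊕_{n∈Z} \overline{X_n}[n] such that X_n lies in the subprojectivity domain of M_n for every integer n. -/
open CategoryTheory CategoryTheory.Limits

universe u

/-- `N` belongs to the subprojectivity domain of `M`: every morphism `M ⟶ N` factors
through a projective object. -/
def SubprojDomain {A : Type*} [Category A] (M N : A) : Prop :=
  ∀ f : M ⟶ N, ∃ (P : A) (_ : Projective P) (a : M ⟶ P) (b : P ⟶ N), a ≫ b = f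

/-- The disc complex `\overline{N}[n]`: the module `N` placed in degrees `n+1` and `n`,
connected by the identity, and `0` elsewhere. -/
def disc {R : Type u} [Ring R] (N : ModuleCat.{u} R) (n : ℤ) :
    ChainComplex (ModuleCat.{u} R) ℤ where
  X i := if i = n + 1 ∨ i = n then N else ModuleCat.of R PUnit
  d i j :=
    if h : i = n + 1 ∧ j = n then
      eqToHom (if_pos (Or.inl h.1)) ≫ eqToHom (if_pos (Or.inr h.2)).symm
    else 0
  shape i j h := by
    try dsimp only
    rw [dif_neg]
    rintro ⟨rfl, rfl⟩
    exact h rfl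
  d_comp_d' i j k hij hjk := by
    simp only [ComplexShape.down_Rel] at hij hjk
    try dsimp only
    by_cases hc : j = n + 1 ∧ k = n
    · rw [dif_neg (by omega), zero_comp]
    · rw [dif_neg hc, comp_zero]

/-!
A complex `P` is a quotient of `⊕ₙ disc(P_{n+1})[n]`, the map being the identity on the top
term of each disc; when `P` is projective this epimorphism splits, and the terms of `P` are
projective since `P ↦ P_m` is left adjoint to `Y ↦ disc(Y)[m]`, which preserves epimorphisms.
Conversely, chain maps `M ⟶ disc(Y)[n]` are the same as module maps `M_n ⟶ Y`, and
`⊕ₙ disc(Xₙ)[n]` is in each degree a sum of only two of its summands, so a chain map into it is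
the family of its components `M_n ⟶ X_n`. Factoring each component through a projective `Qₙ`
factors the chain map through the projective complex `⊕ₙ disc(Qₙ)[n]`.
-/

lemma subprojDomain_of_projective {A : Type*} [Category* A] (M : A) {N : A} [Projective N] :
    SubprojDomain M N :=
  fun f => ⟨N, inferInstance, f, 𝟙 N, Category.comp_id f⟩

lemma projective_sigma {C : Type*} [Category* C] {β : Type*} (g : β → C) [HasCoproduct g]
    [∀ b, Projective (g b)] : Projective (∐ g) where
  factors f e _ := ⟨Sigma.desc fun b => Projective.factorThru (Sigma.ι g b ≫ f) e, by
    ext b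
    simp⟩

lemma CategoryTheory.Limits.Sigma.map_π {C : Type*} [Category* C] [HasZeroMorphisms C]
    {β : Type*} [DecidableEq β] {f g : β → C} [HasCoproduct f] [HasCoproduct g]
    (ψ : ∀ b, f b ⟶ g b) (b : β) : Sigma.map ψ ≫ Sigma.π g b = Sigma.π f b ≫ ψ b := by
  ext c
  by_cases h : c = b
  · subst h; simp
  · simp [Sigma.ι_π_of_ne_assoc _ h, Sigma.ι_π_of_ne _ h]

section TwoTermSupport

variable {V : Type*} [Category* V] [Preadditive V] [HasColimitsOfShape (Discrete ℤ) V]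
  {D : ℤ → ChainComplex V ℤ} (hD : ∀ n k, k ≠ n + 1 → k ≠ n → IsZero ((D n).X k))
  {K : ChainComplex V ℤ}
include hD

lemma id_f_sigma_eq_add (k : ℤ) :
    𝟙 ((∐ D).X k) = (Sigma.π D k).f k ≫ (Sigma.ι D k).f k +
      (Sigma.π D (k - 1)).f k ≫ (Sigma.ι D (k - 1)).f k := by
  refine (isColimitOfPreserves (HomologicalComplex.eval V _ k) (colimit.isColimit _)).hom_ext
    fun ⟨n⟩ => ?_
  change (Sigma.ι D n).f k ≫ _ = (Sigma.ι D n).f k ≫ _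
  simp only [Category.comp_id, Preadditive.comp_add, ← Category.assoc,
    ← HomologicalComplex.comp_f, Sigma.ι_π]
  by_cases h₀ : n = k
  · subst h₀
    simp [show n ≠ n - 1 by omega]
  by_cases h₁ : n = k - 1
  · subst h₁
    simp [h₀]
  · simp [h₀, h₁, (hD n k (by omega) (by omega)).eq_of_src ((Sigma.ι D n).f k) 0]

lemma sigma_hom_ext {g g' : K ⟶ ∐ D} (h : ∀ n, g ≫ Sigma.π D n = g' ≫ Sigma.π D n) :
    g = g' := by
  ext k : 1
  rw [← Category.comp_id (g.f k), ← Category.comp_id (g'.f k), id_f_sigma_eq_add hD]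
  simp only [Preadditive.comp_add, ← Category.assoc, ← HomologicalComplex.comp_f, h]

noncomputable def sigmaLift (φ : ∀ n, K ⟶ D n) : K ⟶ ∐ D where
  f k := (φ k).f k ≫ (Sigma.ι D k).f k + (φ (k - 1)).f k ≫ (Sigma.ι D (k - 1)).f k
  comm' i j hij := by
    simp only [ComplexShape.down_Rel] at hij
    obtain rfl : j = i - 1 := by omega
    have h₀ : (D i).d i (i - 1) = 0 := (hD i (i - 1) (by omega) (by omega)).eq_of_tgt _ _
    have h₂ : (D (i - 1 - 1)).d i (i - 1) = 0 := (hD _ i (by omega) (by omega)).eq_of_src _ _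
    simp [HomologicalComplex.Hom.comm_assoc, h₀, ← (φ (i - 1 - 1)).comm_assoc, h₂]

lemma sigmaLift_π (φ : ∀ n, K ⟶ D n) (n : ℤ) : sigmaLift hD φ ≫ Sigma.π D n = φ n := by
  ext k : 1
  simp only [sigmaLift, HomologicalComplex.comp_f, Preadditive.add_comp, Category.assoc,
    ← HomologicalComplex.comp_f (Sigma.ι D _), Sigma.ι_π]
  by_cases h₀ : k = n
  · subst h₀
    simp [show k - 1 ≠ k by omega]
  by_cases h₁ : k - 1 = n
  · subst h₁
    simp [h₀]
  · simp [h₀, h₁, (hD n k (by omega) (by omega)).eq_of_tgt ((φ n).f k) 0]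

end TwoTermSupport

section Disc

variable {R : Type u} [Ring R] {Y Z : ModuleCat.{u} R} {n : ℤ}
  {K L : ChainComplex (ModuleCat.{u} R) ℤ}

lemma disc_X_of_eq_succ {i : ℤ} (h : i = n + 1) : (disc Y n).X i = Y :=
  if_pos (Or.inl h)

lemma disc_X_of_eq {i : ℤ} (h : i = n) : (disc Y n).X i = Y :=
  if_pos (Or.inr h)

lemma isZero_disc_X {i : ℤ} (h₁ : i ≠ n + 1) (h₀ : i ≠ n) : IsZero ((disc Y n).X i) := by
  rw [show (disc Y n).X i = ModuleCat.of R PUnit from if_neg (by tauto)]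
  exact ModuleCat.isZero_of_subsingleton _

lemma disc_d_succ {i j : ℤ} (hi : i = n + 1) (hj : j = n) :
    (disc Y n).d i j = eqToHom ((disc_X_of_eq_succ hi).trans (disc_X_of_eq hj).symm) :=
  (dif_pos ⟨hi, hj⟩).trans (eqToHom_trans _ _)

lemma disc_d_eq_zero {i j : ℤ} (h : ¬(i = n + 1 ∧ j = n)) : (disc Y n).d i j = 0 :=
  dif_neg h

instance : IsIso ((disc Y n).d (n + 1) n) := by
  rw [disc_d_succ rfl rfl]
  infer_instance

lemma disc_hom_ext {φ ψ : disc Y n ⟶ K} (h : φ.f (n + 1) = ψ.f (n + 1)) : φ = ψ := by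
  ext i : 1
  by_cases h₁ : i = n + 1
  · subst h₁; exact h
  by_cases h₀ : i = n
  · subst h₀
    rw [← cancel_epi ((disc Y i).d (i + 1) i), ← φ.comm, ← ψ.comm, h]
  · exact (isZero_disc_X h₁ h₀).eq_of_src _ _

lemma hom_disc_ext {φ ψ : K ⟶ disc Y n} (h : φ.f n = ψ.f n) : φ = ψ := by
  ext i : 1
  by_cases h₀ : i = n
  · subst h₀; exact h
  by_cases h₁ : i = n + 1
  · subst h₁
    rw [← cancel_mono ((disc Y n).d (n + 1) n), φ.comm, ψ.comm, h]
  · exact (isZero_disc_X h₁ h₀).eq_of_tgt _ _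

def discDesc (φ : Y ⟶ K.X (n + 1)) : disc Y n ⟶ K where
  f i :=
    if h₁ : i = n + 1 then eqToHom (disc_X_of_eq_succ h₁) ≫ φ ≫ eqToHom (by rw [h₁])
    else if h₀ : i = n then eqToHom (disc_X_of_eq h₀) ≫ φ ≫ K.d (n + 1) i
    else 0
  comm' i j hij := by
    simp only [ComplexShape.down_Rel] at hij
    subst hij
    by_cases h₁ : j + 1 = n + 1
    · obtain rfl : j = n := by omega
      simp [disc_d_succ]
    · rw [dif_neg h₁, disc_d_eq_zero (by omega), zero_comp]
      split_ifs with h₀ <;> simp [*]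

lemma discDesc_f_succ (φ : Y ⟶ K.X (n + 1)) :
    (discDesc φ).f (n + 1) = eqToHom (disc_X_of_eq_succ rfl) ≫ φ := by
  simp [discDesc]

lemma discDesc_comp (φ : Y ⟶ K.X (n + 1)) (e : K ⟶ L) :
    discDesc φ ≫ e = discDesc (φ ≫ e.f (n + 1)) :=
  disc_hom_ext (by simp [discDesc_f_succ])

def discLift (g : K.X n ⟶ Y) : K ⟶ disc Y n where
  f i :=
    if h₁ : i = n + 1 then K.d i n ≫ g ≫ eqToHom (disc_X_of_eq_succ h₁).symm
    else if h₀ : i = n then eqToHom (by rw [h₀]) ≫ g ≫ eqToHom (disc_X_of_eq h₀).symm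
    else 0
  comm' i j hij := by
    simp only [ComplexShape.down_Rel] at hij
    subst hij
    by_cases h₀ : j = n
    · subst h₀
      simp [disc_d_succ]
    · rw [disc_d_eq_zero (by omega), comp_zero]
      split_ifs with h₁ <;> simp [*]

lemma discLift_f_succ (g : K.X n ⟶ Y) :
    (discLift g).f (n + 1) = K.d (n + 1) n ≫ g ≫ eqToHom (disc_X_of_eq_succ rfl).symm := by
  simp [discLift]

lemma discLift_f_self (g : K.X n ⟶ Y) :
    (discLift g).f n = g ≫ eqToHom (disc_X_of_eq rfl).symm := by
  simp [discLift]

lemma comp_discLift (e : L ⟶ K) (g : K.X n ⟶ Y) : e ≫ discLift g = discLift (e.f n ≫ g) :=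
  hom_disc_ext (by simp [discLift_f_self])

lemma eq_discLift (φ : K ⟶ disc Y n) : φ = discLift (φ.f n ≫ eqToHom (disc_X_of_eq rfl)) :=
  hom_disc_ext (by simp [discLift_f_self])

def discMap (v : Y ⟶ Z) (n : ℤ) : disc Y n ⟶ disc Z n :=
  discLift (eqToHom (disc_X_of_eq rfl) ≫ v)

lemma discLift_comp_discMap (g : K.X n ⟶ Y) (v : Y ⟶ Z) :
    discLift g ≫ discMap v n = discLift (g ≫ v) := by
  simp [discMap, comp_discLift, discLift_f_self]

instance (v : Y ⟶ Z) [Epi v] : Epi (discMap v n) := by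
  refine HomologicalComplex.epi_of_epi_f _ fun i => ?_
  by_cases h₁ : i = n + 1
  · subst h₁
    simp only [discMap, discLift_f_succ, disc_d_succ, Category.assoc, eqToHom_trans_assoc,
      epi_comp_iff_of_epi]
    infer_instance
  by_cases h₀ : i = n
  · subst h₀
    simp only [discMap, discLift_f_self, Category.assoc, epi_comp_iff_of_epi]
    infer_instance
  · exact (isZero_disc_X h₁ h₀).epi _

instance [Projective Y] : Projective (disc Y n) where
  factors φ e _ := by
    obtain ⟨ψ, hψ⟩ := Projective.factors (eqToHom (disc_X_of_eq_succ rfl).symm ≫ φ.f (n + 1))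
      (e.f (n + 1))
    exact ⟨discDesc ψ, by rw [discDesc_comp, hψ]; exact disc_hom_ext (by simp [discDesc_f_succ])⟩

instance (P : ChainComplex (ModuleCat.{u} R) ℤ) [Projective P] (m : ℤ) : Projective (P.X m) where
  factors g e _ := by
    obtain ⟨ψ, hψ⟩ := Projective.factors (discLift g) (discMap e m)
    refine ⟨ψ.f m ≫ eqToHom (disc_X_of_eq rfl), ?_⟩
    have := congrArg (fun χ => χ.f m ≫ eqToHom (disc_X_of_eq rfl)) hψ
    simpa [discMap, discLift_f_self] using this

noncomputable def discCover (P : ChainComplex (ModuleCat.{u} R) ℤ) :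
    (∐ fun n => disc (P.X (n + 1)) n) ⟶ P :=
  Sigma.desc fun _ => discDesc (𝟙 _)

instance (P : ChainComplex (ModuleCat.{u} R) ℤ) : Epi (discCover P) := by
  refine HomologicalComplex.epi_of_epi_f _ fun k => ?_
  obtain ⟨n, rfl⟩ : ∃ n, k = n + 1 := ⟨k - 1, by omega⟩
  let ι := (Sigma.ι (fun n => disc (P.X (n + 1)) n) n).f (n + 1)
  have h : ι ≫ (discCover P).f (n + 1) = eqToHom (disc_X_of_eq_succ rfl) := by
    simp [ι, ← HomologicalComplex.comp_f, discCover, discDesc_f_succ]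
  have : Epi (ι ≫ (discCover P).f (n + 1)) := by
    rw [h]; infer_instance
  exact epi_of_epi ι _

lemma subprojDomain_sigma_disc {M : ChainComplex (ModuleCat.{u} R) ℤ} {X : ℤ → ModuleCat.{u} R}
    (hX : ∀ n, SubprojDomain (M.X n) (X n)) : SubprojDomain M (∐ fun n => disc (X n) n) := by
  intro g
  have hD (Y : ℤ → ModuleCat.{u} R) (n k : ℤ) (h₁ : k ≠ n + 1) (h₀ : k ≠ n) :
      IsZero ((disc (Y n) n).X k) := isZero_disc_X h₁ h₀
  choose Q hQ u v huv using fun n => hX n ((g ≫ Sigma.π _ n).f n ≫ eqToHom (disc_X_of_eq rfl))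
  refine ⟨∐ fun n => disc (Q n) n, projective_sigma _,
    sigmaLift (hD Q) fun n => discLift (u n), Limits.Sigma.map fun n => discMap (v n) n, ?_⟩
  refine sigma_hom_ext (hD X) fun n => ?_
  rw [Category.assoc, Sigma.map_π, ← Category.assoc, sigmaLift_π, discLift_comp_discMap, huv,
    ← eq_discLift]

end Disc

/-- `N` lies in the subprojectivity domain of `M` iff every chain map
`M ⟶ N` factors through a contractible complex `⊕_{n∈ℤ} \overline{X_n}[n]` with each `X_n`
in the subprojectivity domain of the module `M_n`. -/
theorem subprojDomain_iff_factors_through_contractible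
    {R : Type u} [Ring R] (M N : ChainComplex (ModuleCat.{u} R) ℤ) :
    SubprojDomain M N ↔
      ∀ f : M ⟶ N, ∃ (X : ℤ → ModuleCat.{u} R),
        (∀ n : ℤ, SubprojDomain (M.X n) (X n)) ∧
        ∃ (a : M ⟶ ∐ fun n : ℤ => disc (X n) n)
          (b : (∐ fun n : ℤ => disc (X n) n) ⟶ N), a ≫ b = f := by
  constructor
  · intro h f
    obtain ⟨P, _, a, b, rfl⟩ := h f
    exact ⟨fun n => P.X (n + 1), fun _ => subprojDomain_of_projective _,
      a ≫ Projective.factorThru (𝟙 P) (discCover P), discCover P ≫ b, by simp⟩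
  · intro h f
    obtain ⟨X, hX, a, b, rfl⟩ := h f
    obtain ⟨P, hP, a', b', rfl⟩ := subprojDomain_sigma_disc hX a
    exact ⟨P, hP, a', b' ≫ b, by simp⟩
end

section
/- Let N be a chain complex of R-modules and M an R-module. Then N lies in the subprojectivity domain of the complex ⊕_{n∈Z} \overline{M}[n] if and only if N lies in the subprojectivity domain of \overline{M}[n] for every integer n, if and only if N_n lies in the subprojectivity domain of M (in the category of modules) for every integer n. -/
open CategoryTheory CategoryTheory.Limits

universe u

/-!
Morphisms out of a coproduct are families of morphisms, so factorizations through projectives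
on the summands assemble into one through the coproduct of the projectives; conversely each
summand is a retract of the coproduct.

For the discs, `disc · n` is left adjoint to evaluation in degree `n + 1`, and evaluation in
degree `n + 1` is left adjoint to `disc · (n + 1)`. Left adjoints of epimorphism-preserving
functors preserve projectives, so both `disc · n` and evaluation preserve projectives (the
right adjoint `disc · (n + 1)` of evaluation preserves epimorphisms, being a left adjoint), and a
factorization through a projective can be transported across the adjunction in either direction.
-/

section SubprojDomain

variable {A : Type*} [Category A]

-- Mathlib's instance `Projective (∐ g)` needs the index type in the universe of morphisms,
-- which fails for complexes of `ModuleCat.{u} R` indexed by `ℤ`.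
theorem projective_sigma_s15 {ι : Type*} (P : ι → A) [HasCoproduct P]
    (hP : ∀ i, Projective (P i)) :
    Projective (∐ P) where
  factors f e _ := by
    choose l hl using fun i => (hP i).factors (Sigma.ι P i ≫ f) e
    exact ⟨Sigma.desc l, Sigma.hom_ext _ _ fun i => by simp [hl]⟩

theorem SubprojDomain.of_retract {X Y N : A} (h : Retract X Y) (hY : SubprojDomain Y N) :
    SubprojDomain X N := by
  intro f
  obtain ⟨P, hP, a, b, hab⟩ := hY (h.r ≫ f)
  exact ⟨P, hP, h.i ≫ a, b, by rw [Category.assoc, hab, h.retract_assoc]⟩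

theorem subprojDomain_sigma_iff [HasZeroMorphisms A] {ι : Type*} [HasCoproductsOfShape ι A]
    (X : ι → A) (N : A) : SubprojDomain (∐ X) N ↔ ∀ i, SubprojDomain (X i) N := by
  classical
  refine ⟨fun h i => h.of_retract ⟨Sigma.ι X i, Sigma.π X i, Sigma.ι_π_eq_id X i⟩,
    fun h f => ?_⟩
  choose P hP a b hab using fun i => h i (Sigma.ι X i ≫ f)
  exact ⟨∐ P, projective_sigma_s15 P hP, Limits.Sigma.map a, Sigma.desc b,
    Sigma.hom_ext _ _ fun i => by simp [hab]⟩

theorem CategoryTheory.Adjunction.subprojDomain_obj_iff {B : Type*} [Category B]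
    {L : A ⥤ B} {G : B ⥤ A} {H : A ⥤ B} (adj₁ : L ⊣ G) (adj₂ : G ⊣ H)
    [H.PreservesEpimorphisms] (M : A) (N : B) :
    SubprojDomain (L.obj M) N ↔ SubprojDomain M (G.obj N) := by
  have := Functor.preservesEpimorphisms_of_adjunction adj₂
  constructor
  · intro h g
    obtain ⟨Q, hQ, a, b, hab⟩ := h ((adj₁.homEquiv _ _).symm g)
    refine ⟨G.obj Q, adj₂.map_projective Q hQ, adj₁.homEquiv _ _ a, G.map b, ?_⟩
    rw [← adj₁.homEquiv_naturality_right, hab, Equiv.apply_symm_apply]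
  · intro h f
    obtain ⟨P, hP, a, b, hab⟩ := h (adj₁.homEquiv _ _ f)
    refine ⟨L.obj P, adj₁.map_projective P hP, L.map a, (adj₁.homEquiv _ _).symm b, ?_⟩
    rw [← adj₁.homEquiv_naturality_left_symm, hab, Equiv.symm_apply_apply]

end SubprojDomain

namespace disc

variable {R : Type u} [Ring R] (M : ModuleCat.{u} R) {n : ℤ}

def XIso {i : ℤ} (h : i = n + 1 ∨ i = n) : (disc M n).X i ≅ M :=
  eqToIso (if_pos h)

theorem isZero_X {i : ℤ} (h : ¬(i = n + 1 ∨ i = n)) : IsZero ((disc M n).X i) := by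
  dsimp only [disc]
  rw [if_neg h]
  exact ModuleCat.isZero_of_subsingleton _

variable (n) in
theorem d_top : (disc M n).d (n + 1) n = (XIso M (.inl rfl)).hom ≫ (XIso M (.inr rfl)).inv :=
  dif_pos ⟨rfl, rfl⟩

theorem d_eq_zero {i j : ℤ} (h : ¬(i = n + 1 ∧ j = n)) : (disc M n).d i j = 0 :=
  dif_neg h

variable {M}

def desc {K : ChainComplex (ModuleCat.{u} R) ℤ} (g : M ⟶ K.X (n + 1)) : disc M n ⟶ K where
  f i :=
    if h : i = n + 1 then (XIso M (.inl h)).hom ≫ g ≫ eqToHom (congrArg K.X h.symm)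
    else if h' : i = n then (XIso M (.inr h')).hom ≫ g ≫ K.d (n + 1) i
    else 0
  comm' i j hij := by
    obtain rfl : i = j + 1 := hij.symm
    by_cases hj : j = n
    · subst hj
      simp [d_top, XIso]
    · rw [d_eq_zero M (by omega), zero_comp]
      split_ifs <;> first | omega | simp

def lift {K : ChainComplex (ModuleCat.{u} R) ℤ} (u : K.X n ⟶ M) : K ⟶ disc M n where
  f i :=
    if h : i = n + 1 then K.d i n ≫ u ≫ (XIso M (.inl h)).inv
    else if h' : i = n then eqToHom (congrArg K.X h') ≫ u ≫ (XIso M (.inr h')).inv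
    else 0
  comm' i j hij := by
    obtain rfl : i = j + 1 := hij.symm
    by_cases hj : j = n
    · subst hj
      simp [d_top, XIso]
    · rw [d_eq_zero M (by omega), comp_zero]
      split_ifs <;> first | omega | simp

variable {K : ChainComplex (ModuleCat.{u} R) ℤ}

instance : IsIso ((disc M n).d (n + 1) n) := by
  rw [d_top]
  infer_instance

theorem hom_ext_top {φ ψ : disc M n ⟶ K} (h : φ.f (n + 1) = ψ.f (n + 1)) : φ = ψ := by
  refine HomologicalComplex.hom_ext _ _ fun i => ?_
  by_cases hi : i = n + 1 ∨ i = n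
  · obtain rfl | rfl := hi
    · exact h
    · rw [← cancel_epi ((disc M i).d (i + 1) i), ← φ.comm, ← ψ.comm, h]
  · exact (isZero_X M hi).eq_of_src _ _

theorem hom_ext_bot {φ ψ : K ⟶ disc M n} (h : φ.f n = ψ.f n) : φ = ψ := by
  refine HomologicalComplex.hom_ext _ _ fun i => ?_
  by_cases hi : i = n + 1 ∨ i = n
  · obtain rfl | rfl := hi
    · rw [← cancel_mono ((disc M n).d (n + 1) n), φ.comm, ψ.comm, h]
    · exact h
  · exact (isZero_X M hi).eq_of_tgt _ _

@[simp]
theorem desc_f_top (g : M ⟶ K.X (n + 1)) :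
    (desc g).f (n + 1) = (XIso M (.inl rfl)).hom ≫ g := by
  simp [desc]

@[simp]
theorem lift_f_bot (u : K.X n ⟶ M) : (lift u).f n = u ≫ (XIso M (.inr rfl)).inv := by
  simp [lift]

@[simp]
theorem desc_f_bot (g : M ⟶ K.X (n + 1)) :
    (desc g).f n = (XIso M (.inr rfl)).hom ≫ g ≫ K.d (n + 1) n := by
  simp [desc]

theorem desc_comp {L : ChainComplex (ModuleCat.{u} R) ℤ} (g : M ⟶ K.X (n + 1)) (φ : K ⟶ L) :
    desc g ≫ φ = desc (g ≫ φ.f (n + 1)) :=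
  hom_ext_top (by simp)

theorem desc_comp_desc {M' : ModuleCat.{u} R} (g : M ⟶ M') (φ : M' ⟶ K.X (n + 1)) :
    desc (g ≫ (XIso M' (.inl rfl)).inv) ≫ desc φ = desc (g ≫ φ) := by
  rw [desc_comp, desc_f_top, Category.assoc, Iso.inv_hom_id_assoc]

theorem lift_comp_desc {M' : ModuleCat.{u} R} (u : K.X n ⟶ M) (g : M ⟶ M') :
    lift u ≫ desc (g ≫ (XIso M' (.inl rfl)).inv) = lift (u ≫ g) :=
  hom_ext_bot (by simp [d_top])

variable (M n K) in
def descEquiv : (disc M n ⟶ K) ≃ (M ⟶ K.X (n + 1)) where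
  toFun φ := (XIso M (.inl rfl)).inv ≫ φ.f (n + 1)
  invFun := desc
  left_inv φ := hom_ext_top (by simp)
  right_inv g := by simp

variable (M n K) in
def liftEquiv : (K ⟶ disc M n) ≃ (K.X n ⟶ M) where
  toFun φ := φ.f n ≫ (XIso M (.inr rfl)).hom
  invFun := lift
  left_inv φ := hom_ext_bot (by simp)
  right_inv u := by simp

end disc

open HomologicalComplex

variable {R : Type u} [Ring R]

def discFunctor (n : ℤ) : ModuleCat.{u} R ⥤ ChainComplex (ModuleCat.{u} R) ℤ where
  obj M := disc M n
  map g := disc.desc (g ≫ (disc.XIso _ (.inl rfl)).inv)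
  map_id _ := disc.hom_ext_top (by simp)
  map_comp g g' := by rw [disc.desc_comp_desc, Category.assoc]

def discEvalAdjunction (n : ℤ) :
    discFunctor n ⊣ eval (ModuleCat.{u} R) (ComplexShape.down ℤ) (n + 1) :=
  Adjunction.mkOfHomEquiv
    { homEquiv M K := disc.descEquiv M n K
      homEquiv_naturality_left_symm g φ := (disc.desc_comp_desc g φ).symm
      homEquiv_naturality_right φ g :=
        (Category.assoc (disc.XIso _ (.inl rfl)).inv (φ.f (n + 1)) (g.f (n + 1))).symm }

def evalDiscAdjunction (n : ℤ) :
    eval (ModuleCat.{u} R) (ComplexShape.down ℤ) n ⊣ discFunctor n :=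
  Adjunction.mkOfHomEquiv
    { homEquiv K M := (disc.liftEquiv M n K).symm
      homEquiv_naturality_left_symm φ ψ :=
        Category.assoc (φ.f n) (ψ.f n) (disc.XIso _ (.inr rfl)).hom
      homEquiv_naturality_right u g := (disc.lift_comp_desc u g).symm }

theorem subprojDomain_disc_iff (M : ModuleCat.{u} R) (N : ChainComplex (ModuleCat.{u} R) ℤ)
    (n : ℤ) :
    SubprojDomain (disc M n) N ↔ SubprojDomain M (N.X (n + 1)) :=
  have := Functor.preservesEpimorphisms_of_adjunction (discEvalAdjunction (R := R) (n + 1))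
  (discEvalAdjunction n).subprojDomain_obj_iff (evalDiscAdjunction (n + 1)) M N

/-- `N` lies in the subprojectivity domain of `⊕_{n∈ℤ} \overline{M}[n]` iff
it lies in the subprojectivity domain of every disc `\overline{M}[n]`, iff `N_n` lies in
the subprojectivity domain of the module `M` for every `n`. -/
theorem subprojDomain_sigma_disc_tfae
    {R : Type u} [Ring R] (N : ChainComplex (ModuleCat.{u} R) ℤ) (M : ModuleCat.{u} R) :
    (SubprojDomain (∐ fun n : ℤ => disc M n) N ↔
      ∀ n : ℤ, SubprojDomain (disc M n) N) ∧
    ((∀ n : ℤ, SubprojDomain (disc M n) N) ↔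
      ∀ n : ℤ, SubprojDomain M (N.X n)) := by
  refine ⟨subprojDomain_sigma_iff _ N, ?_⟩
  simp only [subprojDomain_disc_iff]
  exact ⟨fun h n => by simpa using h (n - 1), fun h n => h (n + 1)⟩
end
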